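/- arXiv:2407.04614 — 2 statements merged into one kernel-verified Lean document; each statement's English description precedes it below -/
import Mathlib

section
/- If k edges S* can be added to G so that the resulting graph G* = G ∪ S* has dilation at most t, then the 2k² clique edges on the endpoints of S* also suffice: letting C be all pairs of endpoints of edges in S*, every pair (u,v) admits a u-v path of length at most t·d_M(u,v) in G ∪ C that uses at most one edge of C. -/
open SimpleGraph

/-- Length of a walk in a graph embedded in a metric space, each edge having
length the metric distance between its endpoints. -/
noncomputable def mWalkLen {V : Type*} [MetricSpace V] {G : SimpleGraph V} {u v : V}
    (p : G.Walk u v) : ℝ :=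
  (p.darts.map fun d : G.Dart => Dist.dist d.toProd.1 d.toProd.2).sum

lemma mWalkLen_nil {V : Type*} [MetricSpace V] {G : SimpleGraph V} {u : V} :
    mWalkLen (Walk.nil : G.Walk u u) = 0 := rfl

lemma mWalkLen_cons {V : Type*} [MetricSpace V] {G : SimpleGraph V} {u v w : V}
    (h : G.Adj u v) (p : G.Walk v w) :
    mWalkLen (Walk.cons h p) = dist u v + mWalkLen p := by
  simp [mWalkLen]

lemma mWalkLen_nonneg {V : Type*} [MetricSpace V] {G : SimpleGraph V} {u v : V}
    (p : G.Walk u v) : 0 ≤ mWalkLen p := by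
  apply List.sum_nonneg
  intro x hx
  simp only [List.mem_map] at hx
  obtain ⟨d, _, rfl⟩ := hx
  exact dist_nonneg

/-- Lift a G-walk into G ⊔ H, preserving length, with no non-G darts. -/
lemma lift_walk {V : Type*} [MetricSpace V] (G H : SimpleGraph V) [DecidableRel G.Adj]
    {a b : V} (r : G.Walk a b) :
    ∃ q : (G ⊔ H).Walk a b, mWalkLen q = mWalkLen r ∧
      (q.darts.filter fun d => ¬ G.Adj d.toProd.1 d.toProd.2).length = 0 := by
  induction r with
  | nil => exact ⟨Walk.nil, rfl, rfl⟩
  | cons h p ih =>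
    obtain ⟨q, hq1, hq2⟩ := ih
    refine ⟨Walk.cons (Or.inl h : (G ⊔ H).Adj _ _) q, ?_, ?_⟩
    · rw [mWalkLen_cons, mWalkLen_cons, hq1]
    · rw [Walk.darts_cons, List.filter_cons_of_neg (by simp [h])]
      exact hq2

/-- Suffix extraction: any walk in G ⊔ S can be replaced by a jump from its start
to some vertex y (which is in W or equals the start) followed by a G-walk. -/
lemma suffix_extract {V : Type*} [MetricSpace V] (G S : SimpleGraph V)
    (W : Finset V) (hW : ∀ u v : V, S.Adj u v → u ∈ W ∧ v ∈ W)
    {u v : V} (p : (G ⊔ S).Walk u v) :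
    ∃ y : V, (y ∈ W ∨ y = u) ∧
      ∃ r : G.Walk y v, dist u y + mWalkLen r ≤ mWalkLen p := by
  induction p with
  | nil =>
    exact ⟨_, Or.inr rfl, Walk.nil, by simp [mWalkLen_nil]⟩
  | @cons u w v h p ih =>
    obtain ⟨y, hy, r, hr⟩ := ih
    rw [mWalkLen_cons]
    rcases hy with hyW | rfl
    · refine ⟨y, Or.inl hyW, r, ?_⟩
      calc dist u y + mWalkLen r ≤ (dist u w + dist w y) + mWalkLen r := by
            linarith [dist_triangle u w y]
        _ ≤ dist u w + mWalkLen p := by linarith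
    · rcases h with hG | hS
      · refine ⟨u, Or.inr rfl, Walk.cons hG r, ?_⟩
        rw [mWalkLen_cons]
        simp only [_root_.dist_self] at hr ⊢
        linarith
      · refine ⟨y, Or.inl (hW u y hS).2, r, ?_⟩
        simp only [_root_.dist_self] at hr
        linarith [mWalkLen_nonneg r, dist_nonneg (x := u) (y := y)]

lemma replace_walk {V : Type*} [MetricSpace V] [DecidableEq V]
    (G S : SimpleGraph V) [DecidableRel G.Adj]
    (W : Finset V) (hW : ∀ u v : V, S.Adj u v → u ∈ W ∧ v ∈ W)
    {u v : V} (p : (G ⊔ S).Walk u v) :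
    ∃ q : (G ⊔ (SimpleGraph.fromRel fun x y => x ∈ W ∧ y ∈ W)).Walk u v,
      mWalkLen q ≤ mWalkLen p ∧
      (q.darts.filter fun d => ¬ G.Adj d.toProd.1 d.toProd.2).length ≤ 1 := by
  set C := (SimpleGraph.fromRel fun x y : V => x ∈ W ∧ y ∈ W) with hC
  induction p with
  | nil => exact ⟨Walk.nil, le_refl _, by simp⟩
  | @cons u w v h p ih =>
    rcases h with hG | hS
    · obtain ⟨q, hq1, hq2⟩ := ih
      refine ⟨Walk.cons (Or.inl hG) q, ?_, ?_⟩
      · rw [mWalkLen_cons, mWalkLen_cons]; linarith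
      · rw [Walk.darts_cons, List.filter_cons_of_neg (by simp [hG])]
        exact hq2
    · -- S-edge: u ∈ W, w ∈ W
      obtain ⟨huW, hwW⟩ := hW u w hS
      obtain ⟨y, hy, r, hr⟩ := suffix_extract G S W hW p
      have hyW : y ∈ W := by
        rcases hy with h' | rfl
        · exact h'
        · exact hwW
      obtain ⟨q0, hq01, hq02⟩ := lift_walk G C r
      rw [mWalkLen_cons]
      have htri : dist u y ≤ dist u w + dist w y := dist_triangle u w y
      by_cases huy : u = y
      · subst huy
        refine ⟨q0, ?_, ?_⟩
        · rw [hq01]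
          linarith [dist_nonneg (x := u) (y := w), dist_nonneg (x := w) (y := u)]
        · omega
      · have hadj : (G ⊔ C).Adj u y := Or.inr ⟨huy, Or.inl ⟨huW, hyW⟩⟩
        refine ⟨Walk.cons hadj q0, ?_, ?_⟩
        · rw [mWalkLen_cons, hq01]
          linarith
        · rw [Walk.darts_cons]
          by_cases hg : G.Adj u y
          · rw [List.filter_cons_of_neg (by simp [hg])]
            omega
          · rw [List.filter_cons_of_pos (by simp [hg])]
            simp only [List.length_cons]
            omega

/-- If `k` edges `S*` (with endpoint set `W`) can be added to `G` so that the
resulting graph `G* = G ∪ S*` has dilation at most `t` (witnessed by walks of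
length at most `t·d_M(u,v)` between every pair), then the clique edges `C` on
`W` also suffice: every pair `(u,v)` admits a `u`-`v` walk of length at most
`t·d_M(u,v)` in `G ∪ C` that uses at most one edge of `C` (i.e. at most one
edge outside `G`). -/
theorem clique_one_edge_replacement {V : Type*} [MetricSpace V] [Fintype V]
    [DecidableEq V]
    (G : SimpleGraph V) [DecidableRel G.Adj]
    (Sstar : SimpleGraph V) (W : Finset V) (k : ℕ)
    (hW : ∀ u v : V, Sstar.Adj u v → u ∈ W ∧ v ∈ W) (hWcard : W.card ≤ 2 * k)
    (t : ℝ) (ht : 1 ≤ t)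
    (hdil : ∀ u v : V, ∃ p : (G ⊔ Sstar).Walk u v, mWalkLen p ≤ t * dist u v) :
    ∀ u v : V,
      ∃ q : (G ⊔ (SimpleGraph.fromRel fun x y => x ∈ W ∧ y ∈ W)).Walk u v,
        mWalkLen q ≤ t * dist u v ∧
        (q.darts.filter fun d => ¬ G.Adj d.toProd.1 d.toProd.2).length ≤ 1 := by
  intro u v
  obtain ⟨p, hp⟩ := hdil u v
  obtain ⟨q, hq1, hq2⟩ := replace_walk G Sstar W hW p
  exact ⟨q, le_trans hq1 hp, hq2⟩
end

section
/- In the set cover reduction graph of Section 5, a YES-instance yields dilation t* ≤ 4/ε + 1: if sets S_{ℓ_1},…,S_{ℓ_k} cover all elements, then adding the k edges v_{ℓ_1}v'_{ℓ_1},…,v_{ℓ_k}v'_{ℓ_k} to G gives a graph in which d(u_{i,j}, u'_{i,j}) ≤ 4/ε + 1 for every element-vertex pair and d(v_ℓ, v'_ℓ) ≤ 4/ε for every set-vertex pair. -/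
open SimpleGraph

/-- Vertices of the set cover reduction graph: `u_{i,j}`, `u'_{i,j}` for
elements, and `v_ℓ`, `v'_ℓ`, `w_ℓ` for sets. -/
inductive SCVert : Type
  | u : ℕ → ℕ → SCVert
  | u' : ℕ → ℕ → SCVert
  | v : ℕ → SCVert
  | v' : ℕ → SCVert
  | w : ℕ → SCVert
  deriving DecidableEq

/-- The weighted length of a walk, with edge weights given by `wt`. -/
def scWalkLen {V : Type*} (wt : V → V → ℝ) {G : SimpleGraph V} {a b : V}
    (p : G.Walk a b) : ℝ :=
  (p.darts.map fun d : G.Dart => wt d.toProd.1 d.toProd.2).sum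

/-- Shortest-path distance with respect to edge weights `wt`. -/
noncomputable def scDist {V : Type*} (wt : V → V → ℝ) (G : SimpleGraph V)
    (a b : V) : ℝ :=
  sInf {L : ℝ | ∃ p : G.Walk a b, scWalkLen wt p = L}

/-- The set cover reduction graph `G` augmented with the `k` edges
`v_{ℓ_a}v'_{ℓ_a}` of the chosen cover: edges `u_{i,j}v_ℓ` and `u'_{i,j}v'_ℓ`
whenever `e_i ∈ S_ℓ`, edges `v_ℓw_ℓ` and `v'_ℓw_ℓ`, plus the cover edges
`v_{ℓ_a}v'_{ℓ_a}`.  Here `i ∈ S ℓ` encodes `e_i ∈ S_ℓ`. -/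
def scGraph (m k L : ℕ) (S : ℕ → Finset ℕ) (cov : Fin k → ℕ) :
    SimpleGraph SCVert :=
  SimpleGraph.fromRel (fun x y =>
    match x, y with
    | .u i j, .v ℓ => 1 ≤ i ∧ i ≤ m ∧ 1 ≤ j ∧ j ≤ k + 1 ∧ 1 ≤ ℓ ∧ ℓ ≤ L ∧ i ∈ S ℓ
    | .u' i j, .v' ℓ => 1 ≤ i ∧ i ≤ m ∧ 1 ≤ j ∧ j ≤ k + 1 ∧ 1 ≤ ℓ ∧ ℓ ≤ L ∧ i ∈ S ℓ
    | .v ℓ, .w ℓ' => ℓ = ℓ' ∧ 1 ≤ ℓ ∧ ℓ ≤ L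
    | .v' ℓ, .w ℓ' => ℓ = ℓ' ∧ 1 ≤ ℓ ∧ ℓ ≤ L
    | .v ℓ, .v' ℓ' => ℓ = ℓ' ∧ 1 ≤ ℓ ∧ ℓ ≤ L ∧ ∃ a : Fin k, cov a = ℓ
    | _, _ => False)

/-- Edge weights of the set cover reduction graph: the cover edges
`v_ℓv'_ℓ` have length `1`, all other edges have length `2/ε`. -/
noncomputable def scWeight (ε : ℝ) : SCVert → SCVert → ℝ :=
  fun x y =>
    match x, y with
    | .v _, .v' _ => 1
    | .v' _, .v _ => 1
    | _, _ => 2 / ε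

lemma scWeight_nonneg (ε : ℝ) (hε : 0 < ε) (x y : SCVert) : 0 ≤ scWeight ε x y := by
  cases x <;> cases y <;> simp [scWeight] <;> positivity

lemma scDist_le {ε : ℝ} (hε : 0 < ε) {G : SimpleGraph SCVert} {a b : SCVert}
    (p : G.Walk a b) : scDist (scWeight ε) G a b ≤ scWalkLen (scWeight ε) p := by
  apply csInf_le
  · refine ⟨0, fun x hx => ?_⟩
    obtain ⟨q, rfl⟩ := hx
    exact List.sum_nonneg fun r hr => by
      obtain ⟨d, _, rfl⟩ := List.mem_map.1 hr
      exact scWeight_nonneg ε hε _ _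
  · exact ⟨p, rfl⟩

/-- In the set cover reduction graph, a YES-instance yields dilation
`t* ≤ 4/ε + 1`: if the sets `S_{ℓ_1}, …, S_{ℓ_k}` cover all elements, then in
the graph `G` augmented with the `k` edges `v_{ℓ_a}v'_{ℓ_a}` we have
`d(u_{i,j}, u'_{i,j}) ≤ 4/ε + 1` for every element-vertex pair and
`d(v_ℓ, v'_ℓ) ≤ 4/ε` for every set-vertex pair. -/
theorem sc_yes_instance_dilation (m k L : ℕ) (hm : 1 ≤ m) (hL : 1 ≤ L)
    (S : ℕ → Finset ℕ) (cov : Fin k → ℕ)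
    (hcovrange : ∀ a : Fin k, 1 ≤ cov a ∧ cov a ≤ L)
    (hcover : ∀ i : ℕ, 1 ≤ i → i ≤ m → ∃ a : Fin k, i ∈ S (cov a))
    (ε : ℝ) (hε : 0 < ε) :
    (∀ i j : ℕ, 1 ≤ i → i ≤ m → 1 ≤ j → j ≤ k + 1 →
      scDist (scWeight ε) (scGraph m k L S cov) (.u i j) (.u' i j) ≤ 4 / ε + 1) ∧
    (∀ ℓ : ℕ, 1 ≤ ℓ → ℓ ≤ L →
      scDist (scWeight ε) (scGraph m k L S cov) (.v ℓ) (.v' ℓ) ≤ 4 / ε) := by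
  constructor
  · intro i j hi1 him hj1 hjk
    obtain ⟨a, ha⟩ := hcover i hi1 him
    obtain ⟨hc1, hcL⟩ := hcovrange a
    set ℓ := cov a with hℓ
    have h1 : (scGraph m k L S cov).Adj (.u i j) (.v ℓ) := by
      refine ⟨by simp, Or.inl ?_⟩
      exact ⟨hi1, him, hj1, hjk, hc1, hcL, ha⟩
    have h2 : (scGraph m k L S cov).Adj (.v ℓ) (.v' ℓ) := by
      refine ⟨by simp, Or.inl ?_⟩
      exact ⟨rfl, hc1, hcL, a, rfl⟩
    have h3 : (scGraph m k L S cov).Adj (.v' ℓ) (.u' i j) := by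
      refine ⟨by simp, Or.inr ?_⟩
      exact ⟨hi1, him, hj1, hjk, hc1, hcL, ha⟩
    refine le_trans (scDist_le hε
      (Walk.cons h1 (Walk.cons h2 (Walk.cons h3 Walk.nil)))) ?_
    have : scWalkLen (scWeight ε)
        (Walk.cons h1 (Walk.cons h2 (Walk.cons h3 Walk.nil)))
        = 2 / ε + (1 + (2 / ε + 0)) := by
      simp [scWalkLen, scWeight]
    rw [this]; ring_nf; linarith
  · intro ℓ hℓ1 hℓL
    have h1 : (scGraph m k L S cov).Adj (.v ℓ) (.w ℓ) := by
      exact ⟨by simp, Or.inl ⟨rfl, hℓ1, hℓL⟩⟩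
    have h2 : (scGraph m k L S cov).Adj (.w ℓ) (.v' ℓ) := by
      exact ⟨by simp, Or.inr ⟨rfl, hℓ1, hℓL⟩⟩
    refine le_trans (scDist_le hε (Walk.cons h1 (Walk.cons h2 Walk.nil))) ?_
    have : scWalkLen (scWeight ε) (Walk.cons h1 (Walk.cons h2 Walk.nil))
        = 2 / ε + (2 / ε + 0) := by
      simp [scWalkLen, scWeight]
    rw [this]; ring_nf; linarith
end
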